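/- arXiv:math/0107003 — 5 statements merged into one kernel-verified Lean document; each statement's English description precedes it below -/
import Mathlib

section
/- For integers n and m, define the extended q-binomial coefficient [n m]⁺_q to equal the usual Gaussian binomial coefficient [n m]_q when n ≥ 0, and to equal (-1)^{n-m} q^{-((n-m)² + (n-m))/2} · [−m−1, −n−1]_{q⁻¹} when n < 0. Then for all integers n, m, the q-Pascal identity [n m]⁺_q = q^m [n−1, m]⁺_q + [n−1, m−1]⁺_q holds. -/
noncomputable section
open LaurentPolynomial

def gaussRec (v : LaurentPolynomial ℤ) : ℕ → ℕ → LaurentPolynomial ℤ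
  | 0, 0 => 1
  | 0, _ + 1 => 0
  | _ + 1, 0 => 1
  | n + 1, m + 1 => gaussRec v n (m + 1) * v ^ (m + 1) + gaussRec v n m

/-- `[n m]_v` for integer indices: the Gaussian binomial in the variable `v`,
zero unless `0 ≤ m ≤ n`. -/
def gaussZ (v : LaurentPolynomial ℤ) (n m : ℤ) : LaurentPolynomial ℤ :=
  if 0 ≤ m ∧ m ≤ n then gaussRec v n.toNat m.toNat else 0

/-- The Gaussian binomial coefficient `[n m]_q` as a Laurent polynomial in `q = T 1`. -/
def qbin (n m : ℤ) : LaurentPolynomial ℤ := gaussZ (T 1) n m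

/-- The extended q-binomial coefficient `[n m]⁺_q ∈ ℤ[q,q⁻¹]`. -/
def qbinPlus (n m : ℤ) : LaurentPolynomial ℤ :=
  if 0 ≤ n then qbin n m
  else (-1) ^ (n - m).natAbs * T (-(((n - m) ^ 2 + (n - m)) / 2)) *
    gaussZ (T (-1)) (-m - 1) (-n - 1)


lemma gaussZ_of_not (v : LaurentPolynomial ℤ) {n m : ℤ} (h : ¬(0 ≤ m ∧ m ≤ n)) :
    gaussZ v n m = 0 := if_neg h

lemma gaussZ_of (v : LaurentPolynomial ℤ) {n m : ℤ} (h : 0 ≤ m ∧ m ≤ n) :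
    gaussZ v n m = gaussRec v n.toNat m.toNat := if_pos h

lemma gaussRec_right_zero (v : LaurentPolynomial ℤ) (k : ℕ) : gaussRec v k 0 = 1 := by
  cases k <;> rfl

lemma gaussRec_of_lt (v : LaurentPolynomial ℤ) : ∀ k l : ℕ, k < l → gaussRec v k l = 0 := by
  intro k
  induction k with
  | zero => intro l hl; obtain ⟨l', rfl⟩ := Nat.exists_eq_succ_of_ne_zero (by omega : l ≠ 0); rfl
  | succ k ih =>
    intro l hl
    obtain ⟨l', rfl⟩ := Nat.exists_eq_succ_of_ne_zero (by omega : l ≠ 0)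
    show gaussRec v k (l' + 1) * v ^ (l' + 1) + gaussRec v k l' = 0
    rw [ih (l' + 1) (by omega), ih l' (by omega), zero_mul, zero_add]

lemma gaussZ_pascal (v : LaurentPolynomial ℤ) (a b : ℤ) (h : 1 ≤ a ∨ 1 ≤ b) :
    gaussZ v a b = gaussZ v (a - 1) b * v ^ b.toNat + gaussZ v (a - 1) (b - 1) := by
  rcases lt_trichotomy b 0 with hb | rfl | hb
  · rw [gaussZ_of_not v (by omega), gaussZ_of_not v (by omega), gaussZ_of_not v (by omega)]
    simp
  · have ha : 1 ≤ a := by omega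
    rw [gaussZ_of v (by omega), gaussZ_of v (by omega), gaussZ_of_not v (by omega)]
    simp [gaussRec_right_zero]
  · by_cases hba : b ≤ a
    · have h1 : a.toNat = (a - 1).toNat + 1 := by omega
      have h2 : b.toNat = (b - 1).toNat + 1 := by omega
      have hG : gaussZ v (a - 1) b = gaussRec v (a - 1).toNat b.toNat := by
        by_cases hba' : b ≤ a - 1
        · exact gaussZ_of v (by omega)
        · rw [gaussZ_of_not v (by omega), gaussRec_of_lt v _ _ (by omega)]
      rw [gaussZ_of v (by omega), hG, gaussZ_of v (by omega), h1, h2]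
      rfl
    · rw [gaussZ_of_not v (by omega), gaussZ_of_not v (by omega), gaussZ_of_not v (by omega)]
      simp

lemma neg_one_pow_natAbs (d : ℤ) :
    ((-1 : LaurentPolynomial ℤ)) ^ (d - 1).natAbs = -(-1 : LaurentPolynomial ℤ) ^ d.natAbs := by
  rcases Int.even_or_odd d with he | ho
  · have h0 : d % 2 = 0 := Int.even_iff.mp he
    rw [(Int.natAbs_even.mpr he).neg_one_pow,
      (Int.natAbs_odd.mpr (Int.odd_iff.mpr (by omega))).neg_one_pow]
  · have h0 : d % 2 = 1 := Int.odd_iff.mp ho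
    rw [(Int.natAbs_odd.mpr ho).neg_one_pow,
      (Int.natAbs_even.mpr (Int.even_iff.mpr (by omega))).neg_one_pow, neg_neg]

lemma qbinPlus_of_nonneg (m : ℤ) {n : ℤ} (h : 0 ≤ n) : qbinPlus n m = qbin n m := if_pos h

lemma qbinPlus_of_neg (m : ℤ) {n : ℤ} (h : ¬ 0 ≤ n) :
    qbinPlus n m = (-1) ^ (n - m).natAbs * T (-(((n - m) ^ 2 + (n - m)) / 2)) *
      gaussZ (T (-1)) (-m - 1) (-n - 1) := if_neg h

lemma qexp_succ (d : ℤ) : (d ^ 2 + d) / 2 = ((d - 1) ^ 2 + (d - 1)) / 2 + d := by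
  obtain ⟨c, hc⟩ : ∃ c : ℤ, d ^ 2 + d = c + c :=
    (Int.even_mul_succ_self d).imp fun c h => by linear_combination h
  have h2 : (d - 1) ^ 2 + (d - 1) = (c - d) + (c - d) := by linear_combination hc
  rw [hc, h2]
  omega


/-- the first q-Pascal identity for extended q-binomial coefficients. -/
theorem qbinPlus_pascal_one (n m : ℤ) :
    qbinPlus n m = T m * qbinPlus (n - 1) m + qbinPlus (n - 1) (m - 1) := by
  rcases lt_trichotomy n 0 with hn | rfl | hn
  · -- n ≤ -1
    rw [qbinPlus_of_neg _ (by omega), qbinPlus_of_neg _ (by omega), qbinPlus_of_neg _ (by omega)]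
    rw [show n - 1 - m = n - m - 1 from by ring, show n - 1 - (m - 1) = n - m from by ring,
      show -(n - 1) - 1 = -n from by ring, show -(m - 1) - 1 = -m from by ring,
      neg_one_pow_natAbs (n - m),
      gaussZ_pascal (T (-1)) (-m) (-n) (Or.inr (by omega)),
      show ((T (-1) : LaurentPolynomial ℤ)) ^ (-n).toNat = T n from by
        rw [T_pow]; congr 1; omega]
    have hT : (T m * T (-(((n - m - 1) ^ 2 + (n - m - 1)) / 2)) : LaurentPolynomial ℤ)
        = T n * T (-(((n - m) ^ 2 + (n - m)) / 2)) := by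
      rw [← T_add, ← T_add]
      congr 1
      linarith [qexp_succ (n - m)]
    linear_combination ((-1 : LaurentPolynomial ℤ) ^ (n - m).natAbs
      * gaussZ (T (-1)) (-m - 1) (-n)) * hT
  · -- n = 0
    rw [qbinPlus_of_nonneg _ le_rfl, qbinPlus_of_neg _ (by omega), qbinPlus_of_neg _ (by omega)]
    rw [show (0 : ℤ) - 1 - m = -m - 1 from by ring, show (0 : ℤ) - 1 - (m - 1) = -m from by ring,
      show -((0 : ℤ) - 1) - 1 = 0 from by ring, show -(m - 1) - 1 = -m from by ring,
      neg_one_pow_natAbs (-m)]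
    rcases lt_trichotomy m 0 with hm | rfl | hm
    · -- m ≤ -1
      rw [qbin, gaussZ_of_not _ (by omega),
        gaussZ_of _ (⟨le_rfl, by omega⟩ : (0:ℤ) ≤ 0 ∧ (0:ℤ) ≤ -m - 1),
        gaussZ_of _ (⟨le_rfl, by omega⟩ : (0:ℤ) ≤ 0 ∧ (0:ℤ) ≤ -m)]
      rw [show (0:ℤ).toNat = 0 from rfl, gaussRec_right_zero, gaussRec_right_zero]
      have hT : (T m * T (-(((-m - 1) ^ 2 + (-m - 1)) / 2)) : LaurentPolynomial ℤ)
          = T (-(((-m) ^ 2 + (-m)) / 2)) := by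
        rw [← T_add]
        congr 1
        linarith [qexp_succ (-m)]
      linear_combination ((-1 : LaurentPolynomial ℤ) ^ (-m).natAbs) * hT
    · -- m = 0
      rw [qbin, gaussZ_of _ (⟨le_rfl, le_rfl⟩ : (0:ℤ) ≤ 0 ∧ (0:ℤ) ≤ 0),
        gaussZ_of_not _ (by omega), gaussZ_of _ (⟨le_rfl, by omega⟩ : (0:ℤ) ≤ 0 ∧ (0:ℤ) ≤ -0)]
      norm_num [gaussRec_right_zero]
    · -- m ≥ 1
      rw [qbin, gaussZ_of_not _ (by omega), gaussZ_of_not _ (by omega),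
        gaussZ_of_not _ (by omega)]
      simp
  · -- n ≥ 1
    rw [qbinPlus_of_nonneg _ (by omega), qbinPlus_of_nonneg _ (by omega),
      qbinPlus_of_nonneg _ (by omega)]
    unfold qbin
    by_cases hm : 0 ≤ m
    · rw [gaussZ_pascal (T 1) n m (Or.inl (by omega)),
        show ((T 1 : LaurentPolynomial ℤ)) ^ m.toNat = T m from by
          rw [T_pow]; congr 1; omega]
      ring
    · rw [gaussZ_of_not _ (by omega), gaussZ_of_not _ (by omega), gaussZ_of_not _ (by omega)]
      simp

end
end

section
/- The extended q-binomial coefficients are uniquely determined by the two q-Pascal identities [n m]⁺ = q^m [n−1, m]⁺ + [n−1, m−1]⁺ and [n m]⁺ = [n−1, m]⁺ + q^{n−m} [n−1, m−1]⁺ (valid for all integers n, m), together with the boundary conditions [m m]⁺ = 1 for all m ∈ ℤ and [n 0]⁺ = 0 for all n < 0. That is, any doubly indexed family of Laurent polynomials P(n,m) ∈ ℤ[q,q⁻¹] satisfying both Pascal identities for all integers n, m and these boundary conditions must coincide with the extended q-binomial coefficients. -/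
noncomputable section
open LaurentPolynomial

/-!
Subtracting the two Pascal identities at `(n + 1, m)` gives the row recurrence
`(q ^ m - 1) P(n, m) = (q ^ (n + 1 - m) - 1) P(n, m - 1)`, which the extended coefficients
satisfy as well: for `n ≥ 0` it is the row recurrence of the Gaussian binomials, for `n < 0` the
column recurrence of the Gaussian binomials in `q⁻¹`. Since `q ^ k - 1` is not a zero divisor for
`k ≠ 0`, a solution of the row recurrence that vanishes at `m = n` (and at `m = 0` when `n < 0`)
vanishes on the whole row: the zero propagates down from the diagonal and up from `max n 0`.
-/

lemma neg_one_pow_natAbs_add_one {R : Type*} [Ring R] (k : ℤ) :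
    (-1 : R) ^ (k + 1).natAbs = -(-1) ^ k.natAbs := by
  rw [← Int.coe_negOnePow, ← Int.coe_negOnePow, Int.negOnePow_succ, Units.val_neg, Int.cast_neg]

lemma sq_add_self_div_two_add_one (k : ℤ) :
    ((k + 1) ^ 2 + (k + 1)) / 2 = (k ^ 2 + k) / 2 + (k + 1) := by
  rw [show (k + 1) ^ 2 + (k + 1) = k ^ 2 + k + (k + 1) * 2 by ring,
    Int.add_mul_ediv_right _ _ two_ne_zero]

section Recurrence

variable {R : Type*} [MulZeroClass R] [NoZeroDivisors R] {a b f : ℤ → R}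

theorem eq_zero_of_le_of_recurrence (hrec : ∀ m, a m * f m = b m * f (m - 1)) {k j : ℤ}
    (hkj : k ≤ j) (hk : f k = 0) (ha : ∀ m, k < m → m ≤ j → a m ≠ 0) : f j = 0 := by
  induction j, hkj using Int.leInduction with
  | base => exact hk
  | succ j hkj ih =>
    have h : a (j + 1) * f (j + 1) = 0 := by
      rw [hrec, add_sub_cancel_right, ih fun m hkm hmj => ha m hkm (by omega), mul_zero]
    exact (mul_eq_zero.1 h).resolve_left (ha _ (by omega) le_rfl)

theorem eq_zero_of_ge_of_recurrence (hrec : ∀ m, a m * f m = b m * f (m - 1)) {k j : ℤ}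
    (hjk : j ≤ k) (hk : f k = 0) (hb : ∀ m, j < m → m ≤ k → b m ≠ 0) : f j = 0 := by
  induction j, hjk using Int.leInductionDown with
  | base => exact hk
  | pred j hjk ih =>
    have h : b j * f (j - 1) = 0 := by
      rw [← hrec, ih fun m hjm hmk => hb m (by omega) hmk, mul_zero]
    exact (mul_eq_zero.1 h).resolve_left (hb _ (by omega) hjk)

end Recurrence

theorem LaurentPolynomial.T_sub_one_ne_zero {R : Type*} [Ring R] [Nontrivial R] {k : ℤ}
    (hk : k ≠ 0) : (T k - 1 : R[T;T⁻¹]) ≠ 0 := by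
  rw [sub_ne_zero, ← T_zero]
  intro h
  have := congrArg degree h
  rw [degree_T, degree_T] at this
  exact hk (WithBot.coe_injective this)

theorem eq_zero_of_row_recurrence {R : Type*} [CommRing R] [IsDomain R] {f : ℤ → R[T;T⁻¹]}
    {n : ℤ} (hrec : ∀ m, (T m - 1) * f m = (T (n + 1 - m) - 1) * f (m - 1)) (hn : f n = 0)
    (h₀ : n < 0 → f 0 = 0) (m : ℤ) : f m = 0 := by
  have hup {k : ℤ} (hk : f k = 0) (hk₀ : 0 ≤ k) (hkm : k ≤ m) : f m = 0 :=
    eq_zero_of_le_of_recurrence hrec hkm hk fun _ hkj _ => T_sub_one_ne_zero (by omega)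
  rcases le_or_gt m n with hmn | hnm
  · exact eq_zero_of_ge_of_recurrence hrec hmn hn fun _ _ hjn => T_sub_one_ne_zero (by omega)
  rcases le_or_gt 0 n with hn₀ | hn₀
  · exact hup hn hn₀ hnm.le
  rcases le_or_gt 0 m with hm₀ | hm₀
  · exact hup (h₀ hn₀) le_rfl hm₀
  · exact eq_zero_of_ge_of_recurrence hrec hm₀.le (h₀ hn₀) fun _ hmj _ =>
      T_sub_one_ne_zero (by omega)

section Gaussian

variable (v : LaurentPolynomial ℤ)

lemma gaussRec_zero_right (n : ℕ) : gaussRec v n 0 = 1 := by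
  cases n <;> rfl

lemma gaussRec_succ_succ (n m : ℕ) :
    gaussRec v (n + 1) (m + 1) = gaussRec v n (m + 1) * v ^ (m + 1) + gaussRec v n m :=
  rfl

lemma gaussRec_eq_zero_of_lt : ∀ {n m : ℕ}, n < m → gaussRec v n m = 0
  | 0, _ + 1, _ => rfl
  | n + 1, m + 1, h => by
    rw [gaussRec_succ_succ, gaussRec_eq_zero_of_lt (by omega : n < m + 1),
      gaussRec_eq_zero_of_lt (by omega : n < m), zero_mul, add_zero]

lemma gaussRec_self : ∀ n : ℕ, gaussRec v n n = 1
  | 0 => rfl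
  | n + 1 => by
    rw [gaussRec_succ_succ, gaussRec_eq_zero_of_lt v n.lt_succ_self, gaussRec_self n, zero_mul,
      zero_add]

lemma gaussRec_succ_succ' {n m : ℕ} (h : m ≤ n) :
    gaussRec v (n + 1) (m + 1) = gaussRec v n (m + 1) + v ^ (n - m) * gaussRec v n m := by
  induction n generalizing m with
  | zero =>
    obtain rfl : m = 0 := by omega
    simp [gaussRec]
  | succ n ih =>
    rcases m with _ | m
    · have h₀ := ih (Nat.zero_le n)
      simp only [gaussRec_succ_succ, gaussRec_zero_right, Nat.sub_zero] at h₀ ⊢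
      linear_combination v * h₀
    obtain rfl | hlt := eq_or_lt_of_le (Nat.le_of_succ_le_succ h)
    · simp only [gaussRec_succ_succ, gaussRec_self, Nat.sub_self, gaussRec_eq_zero_of_lt v
        (Nat.lt_succ_self _), gaussRec_eq_zero_of_lt v (by omega : m < m + 2)]
      ring
    obtain ⟨k, rfl⟩ := Nat.exists_eq_add_of_lt hlt
    have h₁ := ih (m := m + 1) (by omega)
    have h₀ := ih (m := m) (by omega)
    rw [show m + k + 1 - (m + 1) = k by omega] at h₁
    rw [show m + k + 1 - m = k + 1 by omega] at h₀
    rw [show m + k + 1 + 1 - (m + 1) = k + 1 by omega, gaussRec_succ_succ v (m + k + 1 + 1)]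
    linear_combination v ^ (m + 2) * h₁ - gaussRec_succ_succ v (m + k + 1) (m + 1) -
      v ^ (k + 1) * gaussRec_succ_succ v (m + k + 1) m + h₀

lemma gaussRec_row {n m : ℕ} (h : m ≤ n) :
    (v ^ (m + 1) - 1) * gaussRec v n (m + 1) = (v ^ (n - m) - 1) * gaussRec v n m := by
  linear_combination gaussRec_succ_succ' v h - gaussRec_succ_succ v n m

lemma gaussRec_col {n m : ℕ} (h : m ≤ n + 1) :
    (v ^ (n + 1 - m) - 1) * gaussRec v (n + 1) m = (v ^ (n + 1) - 1) * gaussRec v n m := by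
  rcases m with _ | m
  · simp only [gaussRec_zero_right, Nat.sub_zero]
  obtain ⟨k, rfl⟩ := Nat.exists_eq_add_of_le (Nat.le_of_succ_le_succ h)
  rw [show m + k + 1 - (m + 1) = k by omega, gaussRec_succ_succ]
  have hrow := gaussRec_row v (Nat.le_add_right m k)
  rw [Nat.add_sub_cancel_left] at hrow
  linear_combination -hrow

end Gaussian

lemma gaussZ_natCast (v : LaurentPolynomial ℤ) (n m : ℕ) : gaussZ v n m = gaussRec v n m := by
  unfold gaussZ
  split_ifs with h
  · simp
  · exact (gaussRec_eq_zero_of_lt v (by omega)).symm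

lemma gaussZ_eq_zero {v : LaurentPolynomial ℤ} {n m : ℤ} (h : ¬(0 ≤ m ∧ m ≤ n)) :
    gaussZ v n m = 0 :=
  if_neg h

lemma gaussZ_row (e n m : ℤ) :
    (T (m * e) - 1) * gaussZ (T e) n m = (T ((n + 1 - m) * e) - 1) * gaussZ (T e) n (m - 1) := by
  by_cases hm : 0 < m ∧ m ≤ n
  · obtain ⟨n, rfl⟩ := Int.eq_ofNat_of_zero_le (by omega : 0 ≤ n)
    obtain ⟨m, rfl⟩ : ∃ k : ℕ, m = k + 1 := ⟨(m - 1).toNat, by omega⟩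
    have hrow := gaussRec_row (T e) (by omega : m ≤ n)
    simp only [T_pow] at hrow
    rw [add_sub_cancel_right, show (n : ℤ) + 1 - (m + 1) = ((n - m : ℕ) : ℤ) by omega,
      ← Nat.cast_succ, gaussZ_natCast, gaussZ_natCast]
    exact hrow
  rcases eq_or_ne m 0 with rfl | hm₀
  · rw [gaussZ_eq_zero (show ¬(0 ≤ (0 : ℤ) - 1 ∧ _) by omega), zero_mul, T_zero, sub_self,
      zero_mul, mul_zero]
  rw [gaussZ_eq_zero (show ¬(0 ≤ m ∧ m ≤ n) by omega), mul_zero]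
  rcases eq_or_ne m (n + 1) with rfl | hm₁
  · rw [sub_self, zero_mul, T_zero, sub_self, zero_mul]
  · rw [gaussZ_eq_zero (by omega), mul_zero]

lemma gaussZ_col (e n m : ℤ) :
    (T ((n + 1 - m) * e) - 1) * gaussZ (T e) (n + 1) m =
      (T ((n + 1) * e) - 1) * gaussZ (T e) n m := by
  by_cases h : 0 ≤ n ∧ 0 ≤ m ∧ m ≤ n + 1
  · obtain ⟨n, rfl⟩ := Int.eq_ofNat_of_zero_le h.1
    obtain ⟨m, rfl⟩ := Int.eq_ofNat_of_zero_le h.2.1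
    have hcol := gaussRec_col (T e) (by omega : m ≤ n + 1)
    simp only [T_pow] at hcol
    rw [show (n : ℤ) + 1 - m = ((n + 1 - m : ℕ) : ℤ) by omega, ← Nat.cast_succ, gaussZ_natCast,
      gaussZ_natCast]
    exact hcol
  rw [gaussZ_eq_zero (show ¬(0 ≤ m ∧ m ≤ n) by omega), mul_zero]
  rcases eq_or_ne m (n + 1) with rfl | hm
  · rw [sub_self, zero_mul, T_zero, sub_self, zero_mul]
  · rw [gaussZ_eq_zero (by omega), mul_zero]

lemma gaussZ_self (v : LaurentPolynomial ℤ) {n : ℤ} (hn : 0 ≤ n) : gaussZ v n n = 1 := by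
  lift n to ℕ using hn
  rw [gaussZ_natCast, gaussRec_self]

lemma qbinPlus_self (m : ℤ) : qbinPlus m m = 1 := by
  unfold qbinPlus qbin
  split_ifs with hm
  · exact gaussZ_self _ hm
  · simp [gaussZ_self _ (by omega : 0 ≤ -m - 1)]

lemma qbinPlus_zero_right_of_neg {n : ℤ} (hn : n < 0) : qbinPlus n 0 = 0 := by
  rw [qbinPlus, if_neg hn.not_ge, gaussZ_eq_zero (by omega), mul_zero]

lemma qbinPlus_row (n m : ℤ) :
    (T m - 1) * qbinPlus n m = (T (n + 1 - m) - 1) * qbinPlus n (m - 1) := by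
  unfold qbinPlus
  split_ifs with hn
  · simpa only [qbin, mul_one] using gaussZ_row 1 n m
  -- For `n < 0`: the column recurrence of `[-m-1, -n-1]` in `q⁻¹`; passing from `m` to `m - 1`
  -- multiplies the sign-and-power prefactor by `-q ^ (-(n + 1 - m))`.
  have hcol := gaussZ_col (-1) (-m - 1) (-n - 1)
  rw [show (-m - 1 + 1 - (-n - 1)) * -1 = -(n - m + 1) by ring,
    show (-m - 1 + 1) * -1 = m by ring] at hcol
  have hinv : T (n - m + 1) * T (-(n - m + 1)) = (1 : LaurentPolynomial ℤ) := by
    rw [← T_add, add_neg_cancel, T_zero]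
  rw [show n - (m - 1) = n - m + 1 by ring, show -(m - 1) - 1 = -m - 1 + 1 by ring,
    show n + 1 - m = n - m + 1 by ring, neg_one_pow_natAbs_add_one, sq_add_self_div_two_add_one,
    neg_add, T_add (-(((n - m) ^ 2 + (n - m)) / 2))]
  linear_combination (-((-1) ^ (n - m).natAbs * T (-(((n - m) ^ 2 + (n - m)) / 2)))) * hcol +
    (-1) ^ (n - m).natAbs * T (-(((n - m) ^ 2 + (n - m)) / 2)) *
      gaussZ (T (-1)) (-m - 1 + 1) (-n - 1) * hinv

/-- the two q-Pascal identities and the boundary conditions uniquely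
determine the extended q-binomial coefficients. -/
theorem qbinPlus_unique (P : ℤ → ℤ → LaurentPolynomial ℤ)
    (h1 : ∀ n m : ℤ, P n m = T m * P (n - 1) m + P (n - 1) (m - 1))
    (h2 : ∀ n m : ℤ, P n m = P (n - 1) m + T (n - m) * P (n - 1) (m - 1))
    (hdiag : ∀ m : ℤ, P m m = 1)
    (hzero : ∀ n : ℤ, n < 0 → P n 0 = 0) :
    ∀ n m : ℤ, P n m = qbinPlus n m := by
  intro n m
  have hrow (k : ℤ) : (T k - 1) * P n k = (T (n + 1 - k) - 1) * P n (k - 1) := by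
    have hpascal₁ := h1 (n + 1) k
    have hpascal₂ := h2 (n + 1) k
    rw [add_sub_cancel_right] at hpascal₁ hpascal₂
    linear_combination hpascal₂ - hpascal₁
  have hdiff (k : ℤ) : (T k - 1) * (P n k - qbinPlus n k) =
      (T (n + 1 - k) - 1) * (P n (k - 1) - qbinPlus n (k - 1)) := by
    linear_combination hrow k - qbinPlus_row n k
  refine sub_eq_zero.1 (eq_zero_of_row_recurrence (f := fun k => P n k - qbinPlus n k) hdiff ?_
    (fun hn => ?_) m)
  · simp only [hdiag, qbinPlus_self, sub_self]
  · simp only [hzero n hn, qbinPlus_zero_right_of_neg hn, sub_self]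

end
end

section
/- Under the setup of the identity between the lattice-sum and the supernomial sum (matrix 𝒜 of size d+2, vector N with associated L = N'T_{d+1} having all components L_i ≥ 0), suppose additionally the well-balanced conditions 2N_+ − N_{d−1} ≥ −(2p−d−2) and 2N_− − N_{d−1} ≥ −(2p−d−2) hold. Then in the sum Σ_{n ∈ ℤ^{d+2}} z^{n_+−n_−} q^{(1/2)n𝒜nᵀ} Π_a [e_a·(N+n−n𝒜), e_a·n]⁺_q, every nonzero summand has all coordinates n_a ≥ 0, so the extended q-binomials may be replaced by ordinary Gaussian binomials. -/
noncomputable section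
open LaurentPolynomial

/-- The symmetric `(d+2) × (d+2)` matrix `𝒜`, with indices `0 ↦ +`, `1 ↦ −`,
`i+2 ↦ i` for `0 ≤ i ≤ d-1`. -/
def Amat (p d : ℕ) : Matrix (Fin (d + 2)) (Fin (d + 2)) ℤ := fun i j =>
  if (i : ℕ) = 0 ∧ (j : ℕ) = 0 then (p : ℤ)
  else if (i : ℕ) = 1 ∧ (j : ℕ) = 1 then (p : ℤ)
  else if ((i : ℕ) = 0 ∧ (j : ℕ) = 1) ∨ ((i : ℕ) = 1 ∧ (j : ℕ) = 0) then -(p : ℤ) + d + 1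
  else if (i : ℕ) ≤ 1 then (j : ℤ) - 1
  else if (j : ℕ) ≤ 1 then (i : ℤ) - 1
  else 2 * min ((i : ℤ) - 1) ((j : ℤ) - 1)

/-- The tridiagonal matrix `T_m` with diagonal `(2, ..., 2, 1)` and `-1` on the
off-diagonals, so that `(T_m⁻¹)_{ij} = min(i,j)`. -/
def Tmat (m : ℕ) : Matrix (Fin m) (Fin m) ℤ := fun i j =>
  if i = j then (if (i : ℕ) = m - 1 then 1 else 2)
  else if (i : ℕ) + 1 = (j : ℕ) ∨ (j : ℕ) + 1 = (i : ℕ) then -1 else 0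

/-- `N' = (N_0, ..., N_{d-1}, N_+ + N_-)`. -/
def Nprime (d : ℕ) (N : Fin (d + 2) → ℤ) : Fin (d + 1) → ℤ := fun i =>
  if h : (i : ℕ) < d then N ⟨(i : ℕ) + 2, by omega⟩ else N 0 + N 1

/-- `L = N' T_{d+1}` (as a row vector times the matrix); `Lvec d N j` is `L_{j+1}`. -/
def Lvec (d : ℕ) (N : Fin (d + 2) → ℤ) : Fin (d + 1) → ℤ := fun j =>
  ∑ i, Nprime d N i * Tmat (d + 1) i j

/-- `(n𝒜)_a = Σ_j n_j 𝒜_{ja}`. -/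
def rowA (p d : ℕ) (n : Fin (d + 2) → ℤ) (a : Fin (d + 2)) : ℤ :=
  ∑ j, n j * Amat p d j a

/-- `P_N(n) = Π_{a ∈ I} [e_a·(N + n − n𝒜), e_a·n]⁺_q`. -/
def Pfun (p d : ℕ) (N n : Fin (d + 2) → ℤ) : LaurentPolynomial ℤ :=
  ∏ a, qbinPlus (N a + n a - rowA p d n a) (n a)


/-!
A nonzero factor `[A, m]⁺` forces `m ≤ A`, and `A < 0` when `m < 0`. For the factors of `P_N(n)`
this says that the slack `M = N - n𝒜` is nonnegative and that `M_a + n_a < 0` whenever `n_a < 0`.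

Since `(T⁻¹)_{ij} = min(i, j)`, one computes `(n𝒜)' T = (2n_0, …, 2n_{d-1}, n_+ + n_-)`, so
`L = M' T + (2n_0, …, 2n_{d-1}, n_+ + n_-)`. As `M' ≥ 0` and `T` has nonpositive off-diagonal
entries, `L_i ≤ 2 (M_i + n_i)` for `i < d` and `L_d ≤ (M_+ + n_+) + (M_- + n_-)`; so `L ≥ 0`
excludes `n_i < 0`, and excludes `n_+ < 0` together with `n_- < 0`. Finally, with `K = 2p - d - 2`,
`K (n_+ - n_- + 1) = (2N_+ - N_{d-1} + K) - 2 (M_+ + n_+) + M_{d-1}`, which the well-balanced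
condition makes positive when `n_+ < 0`; then `n_- ≤ n_+ < 0`. The case of `n_-` is symmetric.
-/

open Matrix

lemma bounds_of_gaussZ_ne_zero {v : LaurentPolynomial ℤ} {n m : ℤ} (h : gaussZ v n m ≠ 0) :
    0 ≤ m ∧ m ≤ n := by
  by_contra hc
  exact h (if_neg hc)

lemma le_of_qbinPlus_ne_zero {n m : ℤ} (h : qbinPlus n m ≠ 0) : m ≤ n ∧ (m < 0 → n < 0) := by
  unfold qbinPlus at h
  split_ifs at h with hn
  · have := bounds_of_gaussZ_ne_zero h
    omega
  · have := bounds_of_gaussZ_ne_zero (right_ne_zero_of_mul h)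
    omega

lemma vecMul_le_mul_diag {ι R : Type*} [Fintype ι] [DecidableEq ι] [Ring R] [PartialOrder R]
    [IsOrderedRing R] {A : Matrix ι ι R} (hA : ∀ i j, i ≠ j → A i j ≤ 0) {v : ι → R}
    (hv : 0 ≤ v) (j : ι) : (v ᵥ* A) j ≤ v j * A j j := by
  rw [vecMul, dotProduct, ← Finset.add_sum_erase _ _ (Finset.mem_univ j)]
  refine add_le_of_nonpos_right (Finset.sum_nonpos fun i hi => ?_)
  exact mul_nonpos_of_nonneg_of_nonpos (hv i) (hA i j (Finset.ne_of_mem_erase hi))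

lemma Tmat_nonpos_of_ne {m : ℕ} {i j : Fin m} (h : i ≠ j) : Tmat m i j ≤ 0 := by
  unfold Tmat
  split_ifs <;> omega

lemma sum_ite_val_eq {M : Type*} [AddCommMonoid M] {m : ℕ} (g : ℕ → M) (a : ℕ) :
    ∑ k : Fin m, (if (k : ℕ) = a then g k else 0) = if a < m then g a else 0 := by
  rw [Fin.sum_univ_eq_sum_range (fun k => if k = a then g k else 0), Finset.sum_ite_eq']
  simp only [Finset.mem_range]

lemma sum_mul_Tmat {m : ℕ} (f : ℕ → ℤ) (j : Fin m) :
    ∑ k : Fin m, f k * Tmat m k j =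
      (if (j : ℕ) = m - 1 then 1 else 2) * f j - (if (j : ℕ) = 0 then 0 else f (j - 1))
        - (if (j : ℕ) + 1 < m then f (j + 1) else 0) := by
  have hT : ∀ k : Fin m, f k * Tmat m k j =
      (if (j : ℕ) = m - 1 then 1 else 2) * (if (k : ℕ) = j then f k else 0)
        - (if (j : ℕ) = 0 then 0 else 1) * (if (k : ℕ) = j - 1 then f k else 0)
        - (if (k : ℕ) = j + 1 then f k else 0) := by
    intro k
    unfold Tmat
    simp only [Fin.ext_iff]
    split_ifs <;> first | ring1 | omega
  simp only [hT, Finset.sum_sub_distrib, ← Finset.mul_sum, sum_ite_val_eq f]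
  have := j.isLt
  split_ifs <;> first | ring1 | omega

/-- `(T_m⁻¹)_{ij} = min(i, j)`, shifted to zero-based indices. -/
def Tinv (m : ℕ) : Matrix (Fin m) (Fin m) ℤ := fun i j => min ((i : ℤ) + 1) ((j : ℤ) + 1)

lemma Tinv_mul_Tmat (m : ℕ) : Tinv m * Tmat m = 1 := by
  ext i j
  rw [Matrix.mul_apply]
  refine (sum_mul_Tmat (fun k : ℕ => min ((i : ℤ) + 1) ((k : ℤ) + 1)) j).trans ?_
  have := i.isLt
  simp only [Matrix.one_apply, Fin.ext_iff]
  split_ifs <;> omega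

/-- `(2n_0, …, 2n_{d-1}, n_+ + n_-)` in the paper's indexing. -/
def foldDouble (d : ℕ) (n : Fin (d + 2) → ℤ) : Fin (d + 1) → ℤ := fun j =>
  if h : (j : ℕ) < d then 2 * n ⟨(j : ℕ) + 2, by omega⟩ else n 0 + n 1

lemma Nprime_Amat_row (p d : ℕ) (k : Fin (d + 2)) (i : Fin (d + 1)) :
    Nprime d (fun a => Amat p d k a) i =
      if (k : ℕ) ≤ 1 then (i : ℤ) + 1 else 2 * min ((k : ℤ) - 1) ((i : ℤ) + 1) := by
  have := k.isLt
  have := i.isLt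
  unfold Nprime Amat
  split_ifs <;>
    simp only [Fin.val_zero, Fin.val_one, and_true, Nat.cast_zero, Nat.cast_one] at * <;> omega

lemma Nprime_rowA (p d : ℕ) (n : Fin (d + 2) → ℤ) :
    Nprime d (rowA p d n) = foldDouble d n ᵥ* Tinv (d + 1) := by
  funext i
  have hfold : Nprime d (rowA p d n) i = ∑ k, n k * Nprime d (fun a => Amat p d k a) i := by
    unfold Nprime rowA
    split_ifs
    · rfl
    · simp only [mul_add, Finset.sum_add_distrib]
  have hinner : ∀ x : Fin d, n x.succ.succ * Nprime d (fun a => Amat p d x.succ.succ a) i =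
      foldDouble d n x.castSucc * Tinv (d + 1) x.castSucc i := by
    intro x
    have hx : (x.succ.succ : Fin (d + 2)) = ⟨x + 2, by omega⟩ := Fin.ext rfl
    simp only [Nprime_Amat_row, foldDouble, Tinv, Fin.val_castSucc, x.isLt, dif_pos, hx]
    rw [if_neg (by omega)]
    push_cast
    ring_nf
  have hlast :
      foldDouble d n (Fin.last d) * Tinv (d + 1) (Fin.last d) i = (n 0 + n 1) * (i + 1) := by
    simp only [foldDouble, Tinv, Fin.val_last, lt_irrefl, dif_neg, not_false_eq_true]
    rw [min_eq_right (by omega)]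
  rw [hfold, vecMul, dotProduct, Fin.sum_univ_succ, Fin.sum_univ_succ, Fin.sum_univ_castSucc,
    Finset.sum_congr rfl fun x _ => hinner x, hlast]
  simp only [Nprime_Amat_row, Fin.succ_zero_eq_one, Fin.val_zero, Fin.val_one, zero_le_one,
    le_refl, if_true]
  ring

lemma Lvec_eq_vecMul (d : ℕ) (N : Fin (d + 2) → ℤ) : Lvec d N = Nprime d N ᵥ* Tmat (d + 1) := rfl

lemma Lvec_rowA (p d : ℕ) (n : Fin (d + 2) → ℤ) : Lvec d (rowA p d n) = foldDouble d n := by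
  rw [Lvec_eq_vecMul, Nprime_rowA, vecMul_vecMul, Tinv_mul_Tmat, vecMul_one]

lemma Nprime_add (d : ℕ) (N M : Fin (d + 2) → ℤ) :
    Nprime d (N + M) = Nprime d N + Nprime d M := by
  funext i
  simp only [Nprime, Pi.add_apply]
  split_ifs <;> ring

lemma Lvec_add (d : ℕ) (N M : Fin (d + 2) → ℤ) : Lvec d (N + M) = Lvec d N + Lvec d M := by
  simp only [Lvec_eq_vecMul, Nprime_add, add_vecMul]

lemma Lvec_le_of_nonneg (d : ℕ) {M : Fin (d + 2) → ℤ} (hM : 0 ≤ M) (j : Fin (d + 1)) :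
    Lvec d M j ≤ Nprime d M j * Tmat (d + 1) j j := by
  refine vecMul_le_mul_diag (fun _ _ => Tmat_nonpos_of_ne) (fun i => ?_) j
  unfold Nprime
  split_ifs
  · exact hM _
  · exact add_nonneg (hM 0) (hM 1)

lemma two_rowA_sub_rowA (p d : ℕ) (hd1 : 1 ≤ d) (n : Fin (d + 2) → ℤ) {a b : Fin (d + 2)}
    (ha : (a : ℕ) ≤ 1) (hb : (b : ℕ) ≤ 1) (hab : a ≠ b) :
    2 * rowA p d n a - rowA p d n ⟨d + 1, by omega⟩ =
      (2 * p - d) * n a - (2 * p - d - 2) * n b := by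
  have hcoef : ∀ k, 2 * Amat p d k a - Amat p d k ⟨d + 1, by omega⟩ =
      (if k = a then 2 * (p : ℤ) - d else 0) - (if k = b then 2 * (p : ℤ) - d - 2 else 0) := by
    intro k
    have := k.isLt
    rw [Ne, Fin.ext_iff] at hab
    unfold Amat
    simp only [Fin.ext_iff]
    split_ifs <;> (try simp only [and_false, or_false] at *) <;> omega
  have hsplit : ∀ k, 2 * (n k * Amat p d k a) - n k * Amat p d k ⟨d + 1, by omega⟩ =
      n k * (2 * Amat p d k a - Amat p d k ⟨d + 1, by omega⟩) := fun k => by ring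
  rw [rowA, rowA, Finset.mul_sum, ← Finset.sum_sub_distrib]
  simp only [hsplit, hcoef, mul_sub, mul_ite, mul_zero, Finset.sum_sub_distrib,
    Finset.sum_ite_eq', Finset.mem_univ, if_true]
  ring

lemma slack_of_Pfun_ne_zero {p d : ℕ} {N n : Fin (d + 2) → ℤ} (h : Pfun p d N n ≠ 0) :
    0 ≤ N - rowA p d n ∧ ∀ a, n a < 0 → N a - rowA p d n a + n a < 0 := by
  have hfac a := le_of_qbinPlus_ne_zero (Finset.prod_ne_zero_iff.mp h a (Finset.mem_univ a))
  refine ⟨fun a => ?_, fun a ha => ?_⟩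
  · simp only [Pi.zero_apply, Pi.sub_apply]
    linarith [(hfac a).1]
  · linarith [(hfac a).2 ha]

section slack

variable {p d : ℕ} {N n : Fin (d + 2) → ℤ}

lemma Lvec_le_slack (hM : 0 ≤ N - rowA p d n) (j : Fin (d + 1)) :
    Lvec d N j ≤ Nprime d (N - rowA p d n) j * Tmat (d + 1) j j + foldDouble d n j :=
  calc Lvec d N j = Lvec d (N - rowA p d n) j + foldDouble d n j := by
        rw [← Lvec_rowA, ← Pi.add_apply, ← Lvec_add, sub_add_cancel]
    _ ≤ _ := by gcongr; exact Lvec_le_of_nonneg d hM j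

lemma inner_coord_nonneg (hL : ∀ j, 0 ≤ Lvec d N j) (hM : 0 ≤ N - rowA p d n)
    (hneg : ∀ a, n a < 0 → N a - rowA p d n a + n a < 0) (t : ℕ) (ht : t < d) :
    0 ≤ n ⟨t + 2, by omega⟩ := by
  by_contra! h
  have hle := Lvec_le_slack hM ⟨t, by omega⟩
  simp only [Nprime, foldDouble, Tmat, dif_pos ht, if_pos, if_neg (show t ≠ d + 1 - 1 by omega),
    Pi.sub_apply] at hle
  linarith [hL ⟨t, by omega⟩, hneg _ h]

lemma not_pm_both_neg (hL : ∀ j, 0 ≤ Lvec d N j) (hM : 0 ≤ N - rowA p d n)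
    (hneg : ∀ a, n a < 0 → N a - rowA p d n a + n a < 0) : ¬ (n 0 < 0 ∧ n 1 < 0) := by
  rintro ⟨h0, h1⟩
  have hle := Lvec_le_slack hM (Fin.last d)
  simp only [Nprime, foldDouble, Tmat, Fin.val_last, lt_irrefl, dif_neg, not_false_eq_true,
    if_pos, Nat.add_sub_cancel, Pi.sub_apply, mul_one] at hle
  linarith [hL (Fin.last d), hneg 0 h0, hneg 1 h1]

lemma le_of_neg_of_wellBalanced (hd : d < 2 * p - 2) (hd1 : 1 ≤ d) (hM : 0 ≤ N - rowA p d n)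
    (hneg : ∀ a, n a < 0 → N a - rowA p d n a + n a < 0) {a b : Fin (d + 2)} (ha : (a : ℕ) ≤ 1)
    (hb : (b : ℕ) ≤ 1) (hab : a ≠ b)
    (hwb : 2 * N a - N ⟨d + 1, by omega⟩ ≥ -(2 * (p : ℤ) - d - 2)) (hna : n a < 0) :
    n b ≤ n a := by
  have hK : (1 : ℤ) ≤ 2 * p - d - 2 := by omega
  have hlast : 0 ≤ N ⟨d + 1, by omega⟩ - rowA p d n ⟨d + 1, by omega⟩ := hM _
  have hpos : 0 < (2 * (p : ℤ) - d - 2) * (n a - n b + 1) := by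
    linarith [two_rowA_sub_rowA p d hd1 n ha hb hab, hneg a hna]
  have := (pos_iff_pos_of_mul_pos hpos).1 (by omega)
  omega

end slack

/-- under `L_i ≥ 0` and the well-balanced conditions, every nonzero
summand of the lattice sum has all coordinates `n_a ≥ 0`. -/
theorem wellbalanced_nonneg (p d : ℕ) (hd : d < 2 * p - 2) (hd1 : 1 ≤ d)
    (N : Fin (d + 2) → ℤ) (hL : ∀ j, 0 ≤ Lvec d N j)
    (hwb1 : 2 * N 0 - N ⟨d + 1, by omega⟩ ≥ -(2 * (p : ℤ) - d - 2))
    (hwb2 : 2 * N 1 - N ⟨d + 1, by omega⟩ ≥ -(2 * (p : ℤ) - d - 2)) :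
    ∀ n : Fin (d + 2) → ℤ, Pfun p d N n ≠ 0 → ∀ a, 0 ≤ n a := by
  intro n hP
  obtain ⟨hM, hneg⟩ := slack_of_Pfun_ne_zero hP
  have hn0 : 0 ≤ n 0 := by
    by_contra! h0
    have h10 := le_of_neg_of_wellBalanced hd hd1 hM hneg (b := 1) (by simp) (by simp)
      (by simp) hwb1 h0
    exact not_pm_both_neg hL hM hneg ⟨h0, h10.trans_lt h0⟩
  have hn1 : 0 ≤ n 1 := by
    by_contra! h1
    have h01 := le_of_neg_of_wellBalanced hd hd1 hM hneg (b := 0) (by simp) (by simp)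
      (by simp) hwb2 h1
    exact not_pm_both_neg hL hM hneg ⟨h01.trans_lt h1, h1⟩
  rintro ⟨_ | _ | t, ha⟩
  · exact hn0
  · exact hn1
  · exact inner_coord_nonneg hL hM hneg t (by omega)

end
end

section
/- With notation as in the lattice sum: let 1 ≤ i ≤ d, and let L = N'T_{d+1} where N' = (N_0,...,N_{d−1},N_++N_−). If L_i ≥ 0 and n_{i−1} < 0 then P_N(n) = 0, where P_N(n) = Π_{a ∈ I} [e_a·(N + n − n𝒜), e_a·n]⁺_q. -/
noncomputable section
open LaurentPolynomial

lemma qbinPlus_eq_zero_of_lt (n m : ℤ) (h : n < m) : qbinPlus n m = 0 := by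
  unfold qbinPlus qbin gaussZ
  split_ifs with h1 h2 h3
  · exfalso; omega
  · rfl
  · exfalso; omega
  · exact mul_zero _

lemma qbinPlus_eq_zero_of_neg (n m : ℤ) (hn : 0 ≤ n) (hm : m < 0) : qbinPlus n m = 0 := by
  unfold qbinPlus qbin gaussZ
  split_ifs with h1
  · exfalso; omega
  · rfl

lemma sum_ite_eq_coe {m : ℕ} (f : Fin m → ℤ) (j : ℕ) (hj : j < m) :
    ∑ k : Fin m, (if (k : ℕ) = j then f k else 0) = f ⟨j, hj⟩ := by
  rw [Finset.sum_eq_single (⟨j, hj⟩ : Fin m)]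
  · rw [if_pos rfl]
  · intro k _ hk
    rw [if_neg (fun h => hk (Fin.ext h))]
  · intro h; exact absurd (Finset.mem_univ _) h

lemma Nprime_lt (d : ℕ) (N : Fin (d + 2) → ℤ) (k m : ℕ) (hk : k < d) (hkd : k < d + 1)
    (hm : m < d + 2) (hkm : k + 2 = m) : Nprime d N ⟨k, hkd⟩ = N ⟨m, hm⟩ := by
  simp only [Nprime]
  rw [dif_pos (show ((⟨k, hkd⟩ : Fin (d + 1)) : ℕ) < d from hk)]
  exact congrArg N (Fin.ext (by simp; omega))

lemma Nprime_last (d : ℕ) (N : Fin (d + 2) → ℤ) (k : ℕ) (hk : ¬ k < d) (h : k < d + 1) :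
    Nprime d N ⟨k, h⟩ = N 0 + N 1 := by
  simp only [Nprime]
  rw [dif_neg (show ¬ ((⟨k, h⟩ : Fin (d + 1)) : ℕ) < d from hk)]

lemma Amat_col (p d : ℕ) (j : Fin (d + 2)) (c : ℕ) (hc : 2 ≤ c) (hcd : c < d + 2) :
    Amat p d j ⟨c, hcd⟩ = if (j : ℕ) ≤ 1 then (c : ℤ) - 1
      else 2 * min (((j : ℕ) : ℤ) - 1) ((c : ℤ) - 1) := by
  simp only [Amat, Fin.val_mk]
  split_ifs <;> first | rfl | (exfalso; omega) | (push_cast; ring)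

lemma Amat_sgn (p d : ℕ) (j : Fin (d + 2)) :
    Amat p d j 0 + Amat p d j 1 = if (j : ℕ) ≤ 1 then (d : ℤ) + 1
      else 2 * (((j : ℕ) : ℤ) - 1) := by
  simp only [Amat, Fin.val_zero, Fin.val_one, Nat.one_ne_zero, Nat.zero_ne_one, and_true, and_false, true_and, false_and,
    or_false, false_or, if_true, if_false, ite_true, ite_false]
  split_ifs <;> first | (exfalso; omega) | (push_cast; ring) | (push_cast; omega)

lemma Amat_comb (p d i : ℕ) (h1 : 1 ≤ i) (h2 : i ≤ d) (ha : i + 1 < d + 2)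
    (hl : i < d + 2) (j : Fin (d + 2)) :
    2 * Amat p d j ⟨i + 1, ha⟩ - (if 2 ≤ i then Amat p d j ⟨i, hl⟩ else 0)
      - (if h : i < d then Amat p d j ⟨i + 2, by omega⟩ else Amat p d j 0 + Amat p d j 1)
    = if (j : ℕ) = i + 1 then 2 else 0 := by
  have hjlt := j.isLt
  rw [Amat_col p d j (i + 1) (by omega) ha, Amat_sgn p d j]
  by_cases h2i : 2 ≤ i
  · rw [if_pos h2i, Amat_col p d j i (by omega) hl]
    by_cases hid : i < d
    · rw [dif_pos hid, Amat_col p d j (i + 2) (by omega) (by omega)]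
      split_ifs <;> push_cast <;> omega
    · rw [dif_neg hid]
      split_ifs <;> push_cast <;> omega
  · rw [if_neg h2i]
    by_cases hid : i < d
    · rw [dif_pos hid, Amat_col p d j (i + 2) (by omega) (by omega)]
      split_ifs <;> push_cast <;> omega
    · rw [dif_neg hid]
      split_ifs <;> push_cast <;> omega

lemma key_sum (p d : ℕ) (n : Fin (d + 2) → ℤ) (i : ℕ) (h1 : 1 ≤ i) (h2 : i ≤ d)
    (ha : i + 1 < d + 2) (hl : i < d + 2) :
    2 * rowA p d n ⟨i + 1, ha⟩ - (if 2 ≤ i then rowA p d n ⟨i, hl⟩ else 0)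
      - (if h : i < d then rowA p d n ⟨i + 2, by omega⟩ else rowA p d n 0 + rowA p d n 1)
    = 2 * n ⟨i + 1, ha⟩ := by
  have key : ∀ j : Fin (d + 2),
      2 * (n j * Amat p d j ⟨i + 1, ha⟩) - (if 2 ≤ i then n j * Amat p d j ⟨i, hl⟩ else 0)
        - (if h : i < d then n j * Amat p d j ⟨i + 2, by omega⟩
            else n j * Amat p d j 0 + n j * Amat p d j 1)
      = if (j : ℕ) = i + 1 then 2 * n j else 0 := by
    intro j
    have hc := Amat_comb p d i h1 h2 ha hl j
    split_ifs at hc ⊢ <;> linear_combination n j * hc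
  unfold rowA
  rw [Finset.mul_sum]
  rw [show (if 2 ≤ i then (∑ j, n j * Amat p d j ⟨i, hl⟩) else 0)
      = ∑ j, (if 2 ≤ i then n j * Amat p d j ⟨i, hl⟩ else 0) from by
    split_ifs <;> simp]
  rw [show (if h : i < d then (∑ j, n j * Amat p d j ⟨i + 2, by omega⟩)
        else (∑ j, n j * Amat p d j 0) + ∑ j, n j * Amat p d j 1)
      = ∑ j, (if h : i < d then n j * Amat p d j ⟨i + 2, by omega⟩
        else n j * Amat p d j 0 + n j * Amat p d j 1) from by
    split_ifs
    · rfl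
    · rw [← Finset.sum_add_distrib]]
  rw [← Finset.sum_sub_distrib, ← Finset.sum_sub_distrib,
    Finset.sum_congr rfl (fun j _ => key j), sum_ite_eq_coe (fun j => 2 * n j) (i + 1) ha]

lemma Lvec_eq (d : ℕ) (N : Fin (d + 2) → ℤ) (i : ℕ) (h1 : 1 ≤ i) (h2 : i ≤ d)
    (hj : i - 1 < d + 1) (ha : i + 1 < d + 2) (hl : i < d + 2) (hi : i < d + 1) :
    Lvec d N ⟨i - 1, hj⟩
      = 2 * N ⟨i + 1, ha⟩ - (if 2 ≤ i then N ⟨i, hl⟩ else 0) - Nprime d N ⟨i, hi⟩ := by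
  have hjv : ((⟨i - 1, hj⟩ : Fin (d + 1)) : ℕ) = i - 1 := rfl
  unfold Lvec
  by_cases h2i : 2 ≤ i
  · rw [Finset.sum_congr rfl (fun k _ => show Nprime d N k * Tmat (d + 1) k ⟨i - 1, hj⟩
        = ((if (k : ℕ) = i - 1 then 2 * Nprime d N k else 0)
          + (if (k : ℕ) = i - 2 then -Nprime d N k else 0))
          + (if (k : ℕ) = i then -Nprime d N k else 0) from by
      simp only [Tmat, Fin.ext_iff, hjv, false_or, or_false, true_or, or_true, if_true, if_false]
      split_ifs <;> first | ring1 | (exfalso; omega))]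
    rw [Finset.sum_add_distrib, Finset.sum_add_distrib,
      sum_ite_eq_coe _ (i - 1) (by omega), sum_ite_eq_coe _ (i - 2) (by omega),
      sum_ite_eq_coe _ i hi]
    rw [Nprime_lt d N (i - 1) (i + 1) (by omega) (by omega) ha (by omega),
      Nprime_lt d N (i - 2) i (by omega) (by omega) hl (by omega), if_pos h2i]
    ring
  · have hieq : i = 1 := by omega
    subst hieq
    rw [Finset.sum_congr rfl (fun k _ => show Nprime d N k * Tmat (d + 1) k ⟨1 - 1, hj⟩
        = (if (k : ℕ) = 0 then 2 * Nprime d N k else 0)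
          + (if (k : ℕ) = 1 then -Nprime d N k else 0) from by
      simp only [Tmat, Fin.ext_iff, hjv, false_or, or_false, true_or, or_true, if_true, if_false]
      split_ifs <;> (try simp only [false_or, or_false] at *) <;> first | ring1 | (exfalso; omega))]
    rw [Finset.sum_add_distrib, sum_ite_eq_coe _ 0 (by omega), sum_ite_eq_coe _ 1 hi]
    rw [Nprime_lt d N 0 2 (by omega) (by omega) ha (by omega), if_neg h2i]
    ring

set_option maxHeartbeats 1600000 in
/-- if `L_i ≥ 0` and `n_{i-1} < 0` (for `1 ≤ i ≤ d`) then `P_N(n) = 0`.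
The (1-based) component `L_i` is `Lvec d N ⟨i-1, _⟩` and `n_{i-1}` sits at matrix
index `(i-1)+2 = i+1`. -/
theorem Pfun_vanish_inner (p d : ℕ) (hp : 2 ≤ p) (hd : d < 2 * p - 2)
    (N n : Fin (d + 2) → ℤ) (i : ℕ) (hi1 : 1 ≤ i) (hi2 : i ≤ d)
    (hLi : 0 ≤ Lvec d N ⟨i - 1, by omega⟩)
    (hn : n ⟨i + 1, by omega⟩ < 0) :
    Pfun p d N n = 0 := by
  have ha : i + 1 < d + 2 := by omega
  have hl : i < d + 2 := by omega
  have hi' : i < d + 1 := by omega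
  by_cases hMa : N ⟨i + 1, ha⟩ + n ⟨i + 1, ha⟩ - rowA p d n ⟨i + 1, ha⟩ < 0
  · have hbL : Pfun p d N n = 0 ∨
        (if 2 ≤ i then rowA p d n ⟨i, hl⟩ else 0) ≤ (if 2 ≤ i then N ⟨i, hl⟩ else 0) := by
      by_cases h2i : 2 ≤ i
      · by_cases hz : N ⟨i, hl⟩ + n ⟨i, hl⟩ - rowA p d n ⟨i, hl⟩ < n ⟨i, hl⟩
        · exact Or.inl (Finset.prod_eq_zero (Finset.mem_univ (⟨i, hl⟩ : Fin (d + 2)))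
            (qbinPlus_eq_zero_of_lt _ _ hz))
        · right; rw [if_pos h2i, if_pos h2i]; linarith [not_lt.mp hz]
      · right; rw [if_neg h2i, if_neg h2i]
    have hbR : Pfun p d N n = 0 ∨
        (if h : i < d then rowA p d n ⟨i + 2, by omega⟩ else rowA p d n 0 + rowA p d n 1)
          ≤ Nprime d N ⟨i, hi'⟩ := by
      by_cases hid : i < d
      · have hr : i + 2 < d + 2 := by omega
        by_cases hz : N ⟨i + 2, hr⟩ + n ⟨i + 2, hr⟩ - rowA p d n ⟨i + 2, hr⟩ < n ⟨i + 2, hr⟩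
        · exact Or.inl (Finset.prod_eq_zero (Finset.mem_univ (⟨i + 2, hr⟩ : Fin (d + 2)))
            (qbinPlus_eq_zero_of_lt _ _ hz))
        · right
          rw [dif_pos hid, Nprime_lt d N i (i + 2) hid hi' hr rfl]
          linarith [not_lt.mp hz]
      · by_cases hz0 : N 0 + n 0 - rowA p d n 0 < n 0
        · exact Or.inl (Finset.prod_eq_zero (Finset.mem_univ (0 : Fin (d + 2)))
            (qbinPlus_eq_zero_of_lt _ _ hz0))
        · by_cases hz1 : N 1 + n 1 - rowA p d n 1 < n 1
          · exact Or.inl (Finset.prod_eq_zero (Finset.mem_univ (1 : Fin (d + 2)))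
              (qbinPlus_eq_zero_of_lt _ _ hz1))
          · right
            rw [dif_neg hid, Nprime_last d N i hid hi']
            linarith [not_lt.mp hz0, not_lt.mp hz1]
    rcases hbL with h | hbL
    · exact h
    rcases hbR with h | hbR
    · exact h
    exfalso
    have hk := key_sum p d n i hi1 hi2 ha hl
    rw [Lvec_eq d N i hi1 hi2 (by omega) ha hl hi'] at hLi
    linarith [hLi, hbL, hbR, hk, hMa]
  · exact Finset.prod_eq_zero (Finset.mem_univ (⟨i + 1, ha⟩ : Fin (d + 2)))
      (qbinPlus_eq_zero_of_neg _ _ (not_lt.mp hMa) hn)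

end
end

section
/- With the lattice-sum notation: assume L_i ≥ 0 for all 1 ≤ i ≤ d+1 (where L = N'T_{d+1}). Then the set of vectors n ∈ ℤ^{d+2} with P_N(n) = Π_{a ∈ I} [e_a·(N + n − n𝒜), e_a·n]⁺_q ≠ 0 is finite. In particular the sum Σ_{n ∈ ℤ^{d+2}} z^{n_+−n_−} q^{(1/2)n𝒜nᵀ} P_N(n) is a well-defined Laurent polynomial in q^{1/2} and z. -/
noncomputable section
open LaurentPolynomial

lemma qbinPlus_ne_zero {B m : ℤ} (h : qbinPlus B m ≠ 0) :
    m ≤ B ∧ (0 ≤ m ∨ B ≤ -1) := by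
  by_cases hB : 0 ≤ B
  · rw [qbinPlus, if_pos hB, qbin, gaussZ] at h
    split_ifs at h with hc
    · exact ⟨hc.2, Or.inl hc.1⟩
    · exact absurd rfl h
  · rw [qbinPlus, if_neg hB, gaussZ] at h
    split_ifs at h with hc
    · refine ⟨by omega, Or.inr (by omega)⟩
    · simp at h

lemma Amat_00 (p d : ℕ) : Amat p d 0 0 = (p:ℤ) := by
  simp [Amat]

lemma Amat_01 (p d : ℕ) : Amat p d 0 1 = -(p:ℤ) + d + 1 := by
  simp [Amat]

lemma Amat_10 (p d : ℕ) : Amat p d 1 0 = -(p:ℤ) + d + 1 := by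
  simp [Amat]

lemma Amat_11 (p d : ℕ) : Amat p d 1 1 = (p:ℤ) := by
  simp [Amat]

lemma Amat_0k (p d : ℕ) (k : ℕ) (hk : k < d) :
    Amat p d 0 ⟨k+2, by omega⟩ = (k:ℤ) + 1 := by
  simp [Amat]
  omega

lemma Amat_1k (p d : ℕ) (k : ℕ) (hk : k < d) :
    Amat p d 1 ⟨k+2, by omega⟩ = (k:ℤ) + 1 := by
  simp [Amat]
  omega

lemma Amat_j0 (p d : ℕ) (j : ℕ) (hj : j < d) :
    Amat p d ⟨j+2, by omega⟩ 0 = (j:ℤ) + 1 := by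
  simp [Amat]
  omega

lemma Amat_j1 (p d : ℕ) (j : ℕ) (hj : j < d) :
    Amat p d ⟨j+2, by omega⟩ 1 = (j:ℤ) + 1 := by
  simp [Amat]
  omega

lemma Amat_jk (p d : ℕ) (j k : ℕ) (hj : j < d) (hk : k < d) :
    Amat p d ⟨j+2, by omega⟩ ⟨k+2, by omega⟩ = 2 * min ((j:ℤ)+1) ((k:ℤ)+1) := by
  simp [Amat]
  omega

def Cser (d : ℕ) (n : Fin (d+2) → ℤ) : ℤ :=
  ∑ j : Fin d, ((j:ℕ)+1 : ℤ) * n ⟨(j:ℕ)+2, by omega⟩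

def Fser (d : ℕ) (n : Fin (d+2) → ℤ) (t : ℕ) : ℤ :=
  (t:ℤ) * (n 0 + n 1) + 2 * ∑ j : Fin d, min (t:ℤ) ((j:ℕ)+1) * n ⟨(j:ℕ)+2, by omega⟩

lemma rowA_split (p d : ℕ) (n : Fin (d+2) → ℤ) (a : Fin (d+2)) :
    rowA p d n a = n 0 * Amat p d 0 a + n 1 * Amat p d 1 a +
      ∑ j : Fin d, n ⟨(j:ℕ)+2, by omega⟩ * Amat p d ⟨(j:ℕ)+2, by omega⟩ a := by
  rw [rowA, Fin.sum_univ_succ, Fin.sum_univ_succ, ← add_assoc]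
  congr 1

lemma rowA_0 (p d : ℕ) (n : Fin (d+2) → ℤ) :
    rowA p d n 0 = (p:ℤ) * n 0 + (-(p:ℤ)+d+1) * n 1 + Cser d n := by
  rw [rowA_split, Amat_00, Amat_10, Cser]
  rw [show (∑ j : Fin d, n ⟨(j:ℕ)+2, by omega⟩ * Amat p d ⟨(j:ℕ)+2, by omega⟩ 0)
      = ∑ j : Fin d, ((j:ℕ)+1 : ℤ) * n ⟨(j:ℕ)+2, by omega⟩ from
    Finset.sum_congr rfl fun j _ => by rw [Amat_j0 p d j j.isLt]; ring]
  ring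

lemma rowA_1 (p d : ℕ) (n : Fin (d+2) → ℤ) :
    rowA p d n 1 = (-(p:ℤ)+d+1) * n 0 + (p:ℤ) * n 1 + Cser d n := by
  rw [rowA_split, Amat_01, Amat_11, Cser]
  rw [show (∑ j : Fin d, n ⟨(j:ℕ)+2, by omega⟩ * Amat p d ⟨(j:ℕ)+2, by omega⟩ 1)
      = ∑ j : Fin d, ((j:ℕ)+1 : ℤ) * n ⟨(j:ℕ)+2, by omega⟩ from
    Finset.sum_congr rfl fun j _ => by rw [Amat_j1 p d j j.isLt]; ring]
  ring

lemma rowA_k (p d : ℕ) (n : Fin (d+2) → ℤ) (k : ℕ) (hk : k < d) :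
    rowA p d n ⟨k+2, by omega⟩ = Fser d n (k+1) := by
  rw [rowA_split, Amat_0k p d k hk, Amat_1k p d k hk, Fser]
  rw [show (∑ j : Fin d, n ⟨(j:ℕ)+2, by omega⟩ * Amat p d ⟨(j:ℕ)+2, by omega⟩ ⟨k+2, by omega⟩)
      = ∑ j : Fin d, 2 * (min ((k:ℕ)+1 : ℤ) ((j:ℕ)+1) * n ⟨(j:ℕ)+2, by omega⟩) from
    Finset.sum_congr rfl fun j _ => by
      rw [Amat_jk p d j k j.isLt hk, min_comm]; push_cast; ring]
  rw [← Finset.mul_sum]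
  push_cast
  ring

lemma Fser_zero (d : ℕ) (n : Fin (d+2) → ℤ) : Fser d n 0 = 0 := by
  simp only [Fser, Nat.cast_zero, zero_mul, zero_add]
  rw [Finset.sum_eq_zero, mul_zero]
  intro j _
  rw [min_eq_left (by positivity)]
  ring

lemma Fser_ge_d (d : ℕ) (n : Fin (d+2) → ℤ) (t : ℕ) (ht : d ≤ t) :
    Fser d n t = (t:ℤ) * (n 0 + n 1) + 2 * Cser d n := by
  rw [Fser, Cser]
  congr 1
  congr 1
  refine Finset.sum_congr rfl fun j _ => ?_
  congr 1
  have : ((j:ℕ):ℤ) + 1 ≤ (t:ℤ) := by have := j.isLt; push_cast; omega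
  rw [min_eq_right this]

lemma Fser_step (d : ℕ) (n : Fin (d+2) → ℤ) :
    Fser d n (d+1) = Fser d n d + (n 0 + n 1) := by
  rw [Fser_ge_d d n (d+1) (by omega), Fser_ge_d d n d (le_refl d)]
  push_cast; ring

lemma Fser_second_diff (d : ℕ) (n : Fin (d+2) → ℤ) (k : ℕ) (hk : k < d) :
    Fser d n k + Fser d n (k+2) + 2 * n ⟨k+2, by omega⟩ = 2 * Fser d n (k+1) := by
  have key : ∀ j : Fin d,
      min ((k:ℕ):ℤ) ((j:ℕ)+1) * n ⟨(j:ℕ)+2, by omega⟩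
      + min (((k:ℕ)+2 : ℕ):ℤ) ((j:ℕ)+1) * n ⟨(j:ℕ)+2, by omega⟩
      + (if j = (⟨k, hk⟩ : Fin d) then (1:ℤ) else 0) * n ⟨(j:ℕ)+2, by omega⟩
      = 2 * (min (((k:ℕ)+1 : ℕ):ℤ) ((j:ℕ)+1) * n ⟨(j:ℕ)+2, by omega⟩) := by
    intro j
    have hj := j.isLt
    rcases eq_or_ne j (⟨k, hk⟩ : Fin d) with h | h
    · subst h
      simp only [if_pos rfl]
      push_cast
      rw [show min ((k:ℤ)) ((k:ℤ)+1) = (k:ℤ) by omega,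
        show min ((k:ℤ)+2) ((k:ℤ)+1) = (k:ℤ)+1 by omega,
        show min ((k:ℤ)+1) ((k:ℤ)+1) = (k:ℤ)+1 by omega]
      ring
    · rw [if_neg h]
      have hjk : (j:ℕ) ≠ k := fun hjj => h (Fin.ext hjj)
      push_cast
      rcases lt_or_gt_of_ne (show ((j:ℕ):ℤ) ≠ (k:ℤ) by exact_mod_cast hjk) with hlt | hgt
      · rw [min_eq_right (by omega), min_eq_right (by omega), min_eq_right (by omega)]
        ring
      · rw [min_eq_left (by omega), min_eq_left (by omega), min_eq_left (by omega)]
        ring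
  have hsum := Finset.sum_congr rfl (fun j (_ : j ∈ Finset.univ) => key j)
  rw [Finset.sum_add_distrib, Finset.sum_add_distrib] at hsum
  have hdelta : (∑ j : Fin d, (if j = (⟨k, hk⟩ : Fin d) then (1:ℤ) else 0) * n ⟨(j:ℕ)+2, by omega⟩)
      = n ⟨k+2, by omega⟩ := by
    rw [Finset.sum_eq_single (⟨k, hk⟩ : Fin d)]
    · simp
    · intro b _ hb; rw [if_neg hb]; ring
    · intro h; exact absurd (Finset.mem_univ _) h
  rw [hdelta] at hsum
  simp only [Fser]
  rw [← Finset.mul_sum] at hsum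
  push_cast at hsum ⊢
  linarith [hsum]

def Npser (d : ℕ) (N : Fin (d+2) → ℤ) (t : ℕ) : ℤ :=
  if h : 1 ≤ t ∧ t ≤ d + 1 then Nprime d N ⟨t-1, by omega⟩ else 0

lemma Tmat_decomp (d : ℕ) (i j : Fin (d+1)) :
    Tmat (d+1) i j = (if i = j then (if (j:ℕ) = d then 1 else 2) else 0)
      + (if (i:ℕ) = (j:ℕ)+1 then (-1:ℤ) else 0)
      + (if (i:ℕ)+1 = (j:ℕ) then (-1:ℤ) else 0) := by
  rcases i with ⟨i, hi⟩
  rcases j with ⟨j, hj⟩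
  simp only [Tmat, Fin.mk.injEq, Fin.val_mk]
  split_ifs <;> omega

lemma sum_pick (d : ℕ) (f : Fin (d+1) → ℤ) (c : ℕ) :
    ∑ i : Fin (d+1), f i * (if (i:ℕ) = c then (-1:ℤ) else 0)
      = if h : c < d+1 then -f ⟨c, h⟩ else 0 := by
  split_ifs with h
  · rw [Finset.sum_eq_single (⟨c, h⟩ : Fin (d+1))]
    · simp
    · intro b _ hb
      rw [if_neg (fun hc => hb (Fin.ext hc)), mul_zero]
    · intro hm; exact absurd (Finset.mem_univ _) hm
  · refine Finset.sum_eq_zero fun i _ => ?_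
    have hne : (i:ℕ) ≠ c := by have := i.isLt; omega
    rw [if_neg hne, mul_zero]

lemma Lvec_eval (d : ℕ) (N : Fin (d+2) → ℤ) (j : Fin (d+1)) :
    Lvec d N j = (if (j:ℕ) = d then 1 else 2) * Nprime d N j
      - (if h : (j:ℕ)+1 < d+1 then Nprime d N ⟨(j:ℕ)+1, h⟩ else 0)
      - (if h2 : (j:ℕ) ≥ 1 then (if h3 : (j:ℕ)-1 < d+1 then Nprime d N ⟨(j:ℕ)-1, h3⟩ else 0) else 0) := by
  rw [Lvec]
  rw [Finset.sum_congr rfl fun i _ => by rw [Tmat_decomp, mul_add, mul_add]]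
  rw [Finset.sum_add_distrib, Finset.sum_add_distrib]
  have h1 : ∑ i : Fin (d+1), Nprime d N i * (if i = j then (if (j:ℕ) = d then (1:ℤ) else 2) else 0)
      = (if (j:ℕ) = d then 1 else 2) * Nprime d N j := by
    rw [Finset.sum_eq_single j]
    · rw [if_pos rfl]; ring
    · intro b _ hb; rw [if_neg hb, mul_zero]
    · intro hm; exact absurd (Finset.mem_univ _) hm
  have h2 : ∑ i : Fin (d+1), Nprime d N i * (if (i:ℕ) = (j:ℕ)+1 then (-1:ℤ) else 0)
      = if h : (j:ℕ)+1 < d+1 then -Nprime d N ⟨(j:ℕ)+1, h⟩ else 0 := sum_pick d _ _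
  have h3 : ∑ i : Fin (d+1), Nprime d N i * (if (i:ℕ)+1 = (j:ℕ) then (-1:ℤ) else 0)
      = if h2 : (j:ℕ) ≥ 1 then (if h3 : (j:ℕ)-1 < d+1 then -Nprime d N ⟨(j:ℕ)-1, h3⟩ else 0) else 0 := by
    rcases Nat.lt_or_ge (j:ℕ) 1 with hj | hj
    · rw [dif_neg (by omega)]
      refine Finset.sum_eq_zero fun i _ => ?_
      rw [if_neg (by omega), mul_zero]
    · rw [dif_pos hj]
      rw [Finset.sum_congr rfl fun i (_ : i ∈ Finset.univ) => by
        rw [show (if (i:ℕ)+1 = (j:ℕ) then (-1:ℤ) else 0) = (if (i:ℕ) = (j:ℕ)-1 then (-1:ℤ) else 0)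
          from if_congr (by omega) rfl rfl]]
      exact sum_pick d _ _
  rw [h1, h2, h3]
  split_ifs <;> ring

lemma Npser_zero (d : ℕ) (N : Fin (d+2) → ℤ) : Npser d N 0 = 0 := by
  rw [Npser, dif_neg (by omega)]

lemma Nprime_as_Npser (d : ℕ) (N : Fin (d+2) → ℤ) (c : ℕ) (h : c < d+1) :
    Nprime d N ⟨c, h⟩ = Npser d N (c+1) := by
  rw [Npser, dif_pos (by omega : 1 ≤ c+1 ∧ c+1 ≤ d+1)]
  rfl

lemma Np_concave (d : ℕ) (N : Fin (d+2) → ℤ) (hL : ∀ j, 0 ≤ Lvec d N j)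
    (k : ℕ) (hk : k < d) :
    Npser d N k + Npser d N (k+2) ≤ 2 * Npser d N (k+1) := by
  have h := hL ⟨k, by omega⟩
  rw [Lvec_eval] at h
  simp only [Fin.val_mk] at h
  rw [if_neg (by omega), dif_pos (by omega : k+1 < d+1)] at h
  rw [Nprime_as_Npser, Nprime_as_Npser, show k+1+1 = k+2 from rfl] at h
  by_cases h0 : k ≥ 1
  · rw [dif_pos h0, dif_pos (by omega : k-1 < d+1), Nprime_as_Npser,
      show k-1+1 = k from by omega] at h
    omega
  · rw [dif_neg h0] at h
    have hk0 : k = 0 := by omega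
    subst hk0
    rw [Npser_zero]
    omega

lemma Np_last (d : ℕ) (N : Fin (d+2) → ℤ) (hL : ∀ j, 0 ≤ Lvec d N j) :
    Npser d N d ≤ Npser d N (d+1) := by
  have h := hL ⟨d, by omega⟩
  rw [Lvec_eval] at h
  simp only [Fin.val_mk] at h
  rw [if_pos trivial, dif_neg (by omega : ¬ (d+1 < d+1)), Nprime_as_Npser] at h
  by_cases h0 : d ≥ 1
  · rw [dif_pos h0, dif_pos (by omega : d-1 < d+1), Nprime_as_Npser,
      show d-1+1 = d from by omega] at h
    omega
  · have hd0 : d = 0 := by omega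
    subst hd0
    rw [dif_neg h0] at h
    rw [Npser_zero]
    omega

lemma Npser_mid (d : ℕ) (N : Fin (d+2) → ℤ) (k : ℕ) (hk : k < d) :
    Npser d N (k+1) = N ⟨k+2, by omega⟩ := by
  rw [← Nprime_as_Npser d N k (by omega), Nprime]
  simp only [Fin.val_mk]
  rw [dif_pos hk]

lemma Npser_top (d : ℕ) (N : Fin (d+2) → ℤ) :
    Npser d N (d+1) = N 0 + N 1 := by
  rw [← Nprime_as_Npser d N d (by omega), Nprime]
  simp only [Fin.val_mk]
  rw [dif_neg (by omega)]

lemma Pfun_cases (p d : ℕ) (N n : Fin (d+2) → ℤ) (h : Pfun p d N n ≠ 0) (a : Fin (d+2)) :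
    rowA p d n a ≤ N a ∧ (0 ≤ n a ∨ N a + n a + 1 ≤ rowA p d n a) := by
  have ha : qbinPlus (N a + n a - rowA p d n a) (n a) ≠ 0 := by
    intro h0
    exact h (Finset.prod_eq_zero (Finset.mem_univ a) h0)
  have := qbinPlus_ne_zero ha
  omega

lemma rowA_sum01 (p d : ℕ) (n : Fin (d+2) → ℤ) :
    rowA p d n 0 + rowA p d n 1 = Fser d n (d+1) := by
  rw [rowA_0, rowA_1, Fser_ge_d d n (d+1) (by omega)]
  push_cast
  ring

lemma FleN (p d : ℕ) (N n : Fin (d+2) → ℤ) (h : Pfun p d N n ≠ 0) :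
    ∀ t, t ≤ d+1 → Fser d n t ≤ Npser d N t := by
  intro t ht
  rcases Nat.eq_zero_or_pos t with h0 | h0
  · subst h0; rw [Fser_zero, Npser_zero]
  rcases Nat.lt_or_ge t (d+1) with hlt | hge
  · obtain ⟨k, rfl⟩ : ∃ k, t = k + 1 := ⟨t-1, by omega⟩
    have hk : k < d := by omega
    rw [← rowA_k p d n k hk, Npser_mid d N k hk]
    exact (Pfun_cases p d N n h _).1
  · have : t = d + 1 := by omega
    subst this
    rw [← rowA_sum01 p d n, Npser_top]
    have h0' := (Pfun_cases p d N n h 0).1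
    have h1' := (Pfun_cases p d N n h 1).1
    omega

lemma nk_nonneg (p d : ℕ) (N n : Fin (d+2) → ℤ) (hL : ∀ j, 0 ≤ Lvec d N j)
    (h : Pfun p d N n ≠ 0) (k : ℕ) (hk : k < d) :
    0 ≤ n ⟨k+2, by omega⟩ := by
  rcases (Pfun_cases p d N n h ⟨k+2, by omega⟩).2 with h1 | h1
  · exact h1
  exfalso
  rw [rowA_k p d n k hk] at h1
  rw [show (⟨k+2, by omega⟩ : Fin (d+2)) = ⟨k+2, by omega⟩ from rfl] at h1
  have hN : N ⟨k+2, by omega⟩ = Npser d N (k+1) := (Npser_mid d N k hk).symm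
  have e2 := Fser_second_diff d n k hk
  have e3 := FleN p d N n h k (by omega)
  have e4 := FleN p d N n h (k+2) (by omega)
  have e5 := Np_concave d N hL k hk
  omega

lemma not_both_B (p d : ℕ) (N n : Fin (d+2) → ℤ) (hL : ∀ j, 0 ≤ Lvec d N j)
    (h : Pfun p d N n ≠ 0) :
    ¬ (N 0 + n 0 + 1 ≤ rowA p d n 0 ∧ N 1 + n 1 + 1 ≤ rowA p d n 1) := by
  rintro ⟨h0, h1⟩
  have hsum := rowA_sum01 p d n
  have hstep := Fser_step d n
  have hG := FleN p d N n h d (by omega)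
  have hlast := Np_last d N hL
  have htop := Npser_top d N
  omega

def Rbd (d : ℕ) (N : Fin (d+2) → ℤ) : ℤ :=
  |N 0 + N 1| + ((d:ℤ)+1) * (|N 0 - N 1| + 1) + |N 0 - N 1| + 2

lemma Rbd_nonneg (d : ℕ) (N : Fin (d+2) → ℤ) : 0 ≤ Rbd d N := by
  rw [Rbd]
  have h1 : (0:ℤ) ≤ |N 0 + N 1| := abs_nonneg _
  have h2 : (0:ℤ) ≤ |N 0 - N 1| := abs_nonneg _
  have h3 : (0:ℤ) ≤ ((d:ℤ)+1) * (|N 0 - N 1| + 1) := by positivity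
  linarith

lemma Cser_nonneg (p d : ℕ) (N n : Fin (d+2) → ℤ) (hL : ∀ j, 0 ≤ Lvec d N j)
    (h : Pfun p d N n ≠ 0) : 0 ≤ Cser d n := by
  refine Finset.sum_nonneg fun j _ => mul_nonneg (by positivity) ?_
  exact nk_nonneg p d N n hL h j j.isLt

lemma nk_le_C (p d : ℕ) (N n : Fin (d+2) → ℤ) (hL : ∀ j, 0 ≤ Lvec d N j)
    (h : Pfun p d N n ≠ 0) (k : ℕ) (hk : k < d) :
    n ⟨k+2, by omega⟩ ≤ Cser d n := by
  have hpos : ∀ j : Fin d, (0:ℤ) ≤ ((j:ℕ)+1:ℤ) * n ⟨(j:ℕ)+2, by omega⟩ :=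
    fun j => mul_nonneg (by positivity) (nk_nonneg p d N n hL h j j.isLt)
  have hs := Finset.single_le_sum (f := fun j : Fin d => ((j:ℕ)+1:ℤ) * n ⟨(j:ℕ)+2, by omega⟩)
    (fun j _ => hpos j) (Finset.mem_univ (⟨k, hk⟩ : Fin d))
  simp only [Fin.val_mk] at hs
  have hn := nk_nonneg p d N n hL h k hk
  have hkz : (0:ℤ) ≤ (k:ℤ) := by positivity
  rw [Cser]
  nlinarith [hs, hn, mul_nonneg hkz hn]

lemma sum_ineq (p d : ℕ) (N n : Fin (d+2) → ℤ) (h : Pfun p d N n ≠ 0) :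
    ((d:ℤ)+1) * (n 0 + n 1) + 2 * Cser d n ≤ N 0 + N 1 := by
  have hr0 := (Pfun_cases p d N n h 0).1
  have hr1 := (Pfun_cases p d N n h 1).1
  rw [rowA_0] at hr0
  rw [rowA_1] at hr1
  linarith

lemma coord_bounds (p d : ℕ) (hp : 2 ≤ p) (hd : d < 2 * p - 2)
    (N n : Fin (d+2) → ℤ) (hL : ∀ j, 0 ≤ Lvec d N j) (h : Pfun p d N n ≠ 0) :
    |n 0| ≤ Rbd d N ∧ |n 1| ≤ Rbd d N ∧ Cser d n ≤ Rbd d N := by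
  have hK : (1:ℤ) ≤ 2*(p:ℤ) - d - 2 := by
    have h2 : d + 2 < 2 * p := by omega
    push_cast
    omega
  set K : ℤ := 2*(p:ℤ) - d - 2 with hKdef
  have he : (0:ℤ) ≤ (d:ℤ) := by positivity
  have hM := le_abs_self (N 0 + N 1)
  have hM' := neg_le_abs (N 0 + N 1)
  have hD := le_abs_self (N 0 - N 1)
  have hD' := neg_le_abs (N 0 - N 1)
  have hDnn : (0:ℤ) ≤ |N 0 - N 1| := abs_nonneg _
  have hMnn : (0:ℤ) ≤ |N 0 + N 1| := abs_nonneg _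
  have hsum := sum_ineq p d N n h
  have hC0 := Cser_nonneg p d N n hL h
  have hor0 := (Pfun_cases p d N n h 0).2
  have hor1 := (Pfun_cases p d N n h 1).2
  have hr0 := (Pfun_cases p d N n h 0).1
  have hr1 := (Pfun_cases p d N n h 1).1
  have hnb := not_both_B p d N n hL h
  have hRpos := Rbd_nonneg d N
  have hterm : (0:ℤ) ≤ ((d:ℤ)+1) * (|N 0 - N 1| + 1) := by positivity
  rw [Rbd] at hRpos ⊢
  rcases le_or_gt 0 (n 0) with hn0 | hn0
  · rcases le_or_gt 0 (n 1) with hn1 | hn1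
    · -- both nonneg
      have hes : (0:ℤ) ≤ (d:ℤ) * (n 0 + n 1) := mul_nonneg he (by linarith)
      refine ⟨?_, ?_, ?_⟩
      · rw [abs_le]; constructor <;> linarith
      · rw [abs_le]; constructor <;> linarith
      · linarith
    · -- n1 < 0 : case B at 1, case A at 0
      have hB1 : N 1 + n 1 + 1 ≤ rowA p d n 1 := by
        rcases hor1 with h' | h'
        · omega
        · exact h'
      have hkey : K * n 1 + n 1 - (K * n 0 + n 0) ≥ N 1 - N 0 + n 1 + 1 := by
        have hdiff : rowA p d n 1 - rowA p d n 0 = K * n 1 + n 1 - (K * n 0 + n 0) := by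
          rw [rowA_0, rowA_1, hKdef]; ring
        linarith
      have hx : K * n 1 ≤ n 1 := by
        have h1 : (K-1) * n 1 ≤ 0 := mul_nonpos_of_nonneg_of_nonpos (by linarith) (by linarith)
        linarith [h1]
      have hz : (0:ℤ) ≤ K * n 0 := mul_nonneg (by linarith) hn0
      have hw : K * n 1 ≤ -K := by
        have h1 := mul_le_mul_of_nonneg_left (show n 1 ≤ -1 by linarith) (show (0:ℤ) ≤ K by linarith)
        linarith [h1]
      have hn1lb : N 1 - N 0 + 1 ≤ n 1 := by linarith
      have hn0ub : n 0 ≤ N 0 - N 1 - 2 := by linarith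
      have hslb : -(|N 0 - N 1| + 1) ≤ n 0 + n 1 := by linarith
      have hms := mul_le_mul_of_nonneg_left hslb (show (0:ℤ) ≤ (d:ℤ)+1 by positivity)
      refine ⟨?_, ?_, ?_⟩
      · rw [abs_le]; constructor <;> linarith
      · rw [abs_le]; constructor <;> linarith
      · linarith
  · -- n0 < 0 : case B at 0
    have hB0 : N 0 + n 0 + 1 ≤ rowA p d n 0 := by
      rcases hor0 with h' | h'
      · omega
      · exact h'
    have hn1 : 0 ≤ n 1 := by
      by_contra hn1
      push_neg at hn1
      have hB1 : N 1 + n 1 + 1 ≤ rowA p d n 1 := by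
        rcases hor1 with h' | h'
        · omega
        · exact h'
      exact hnb ⟨hB0, hB1⟩
    have hkey : K * n 0 + n 0 - (K * n 1 + n 1) ≥ N 0 - N 1 + n 0 + 1 := by
      have hdiff : rowA p d n 0 - rowA p d n 1 = K * n 0 + n 0 - (K * n 1 + n 1) := by
        rw [rowA_0, rowA_1, hKdef]; ring
      linarith
    have hx : K * n 0 ≤ n 0 := by
      have h1 : (K-1) * n 0 ≤ 0 := mul_nonpos_of_nonneg_of_nonpos (by linarith) (by linarith)
      linarith [h1]
    have hz : (0:ℤ) ≤ K * n 1 := mul_nonneg (by linarith) hn1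
    have hw : K * n 0 ≤ -K := by
      have h1 := mul_le_mul_of_nonneg_left (show n 0 ≤ -1 by linarith) (show (0:ℤ) ≤ K by linarith)
      linarith [h1]
    have hn0lb : N 0 - N 1 + 1 ≤ n 0 := by linarith
    have hn1ub : n 1 ≤ N 1 - N 0 - 2 := by linarith
    have hslb : -(|N 0 - N 1| + 1) ≤ n 0 + n 1 := by linarith
    have hms := mul_le_mul_of_nonneg_left hslb (show (0:ℤ) ≤ (d:ℤ)+1 by positivity)
    refine ⟨?_, ?_, ?_⟩
    · rw [abs_le]; constructor <;> linarith
    · rw [abs_le]; constructor <;> linarith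
    · linarith


/-- if all `L_i ≥ 0` then only finitely many `n ∈ ℤ^{d+2}` have
`P_N(n) ≠ 0`, so the lattice sum is a well-defined Laurent polynomial. -/
theorem Pfun_support_finite (p d : ℕ) (hp : 2 ≤ p) (hd : d < 2 * p - 2)
    (N : Fin (d + 2) → ℤ) (hL : ∀ j, 0 ≤ Lvec d N j) :
    {n : Fin (d + 2) → ℤ | Pfun p d N n ≠ 0}.Finite := by
  have hfin : (Set.pi Set.univ (fun _ : Fin (d+2) => Set.Icc (-(Rbd d N)) (Rbd d N))).Finite :=
    Set.Finite.pi (fun i => Set.finite_Icc _ _)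
  refine Set.Finite.subset hfin ?_
  intro n hn
  simp only [Set.mem_setOf_eq] at hn
  obtain ⟨b0, b1, bC⟩ := coord_bounds p d hp hd N n hL hn
  rw [Set.mem_pi]
  intro a _
  rw [Set.mem_Icc]
  obtain ⟨v, hv⟩ := a
  rcases Nat.lt_or_ge v 2 with h2 | h2
  · interval_cases v
    · exact abs_le.mp b0
    · exact abs_le.mp b1
  · obtain ⟨k, rfl⟩ : ∃ k, v = k + 2 := ⟨v - 2, by omega⟩
    have hk : k < d := by omega
    have e : (⟨k+2, hv⟩ : Fin (d+2)) = ⟨k+2, by omega⟩ := rfl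
    rw [e]
    have h1 := nk_nonneg p d N n hL hn k hk
    have h2 := nk_le_C p d N n hL hn k hk
    have hR := Rbd_nonneg d N
    constructor
    · linarith
    · linarith

end
end
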